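/- Let E_r, A_r ∈ ℝ^{n×n} with E_r invertible and every complex root λ of det(A_r − λE_r) satisfying Re λ < 0. Let B_r ∈ ℝ^{n×m}, C_r ∈ ℝ^{(p+m)×n}, D_r ∈ ℝ^{(p+m)×m}, let [N; M] := C_r(sE_r − A_r)^{−1}B_r + D_r (N the first p rows, M the last m rows), assume det M ≢ 0, that there exist stable X̃, Ỹ with ỸM − X̃N = I_m, and let H_r ∈ ℝ^{m×m} be invertible with H_rᵀH_r = D_rᵀD_r. Let X_r be a symmetric stabilizing solution of the GCARE with stabilizing feedback F_r := −(D_rᵀD_r)^{−1}(B_rᵀX_rE_r + D_rᵀC_r), and define G₀ := −H_rF_r(sE_r − A_r)^{−1}B_r + H_r ∈ ℝ(s)^{m×m}. Then det G₀ ≢ 0, and the pair N̂ := N G₀^{−1}, M̂ := M G₀^{−1} is a stable normalized right coprime factorization of G := N M^{−1}: N̂ and M̂ are stable, det M̂ ≢ 0, G = N̂ M̂^{−1}, there exist stable X̃′, Ỹ′ with Ỹ′M̂ − X̃′N̂ = I_m, and the normalization identity (N̂(−s))ᵀN̂(s) + (M̂(−s))ᵀM̂(s) = I_m holds. -/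

import Mathlib

open Matrix Polynomial
open scoped Kronecker

set_option synthInstance.maxHeartbeats 400000
set_option maxHeartbeats 1000000

noncomputable section

/-- The field ℝ(s) of real rational functions. -/
abbrev RF := RatFunc ℝ

/-- A rational function is proper if the degree of its numerator (in lowest terms)
is at most the degree of its denominator. -/
def RFproper (f : RF) : Prop := f.num.degree ≤ f.denom.degree

/-- A rational function is stable: proper and every complex root of its denominator
has strictly negative real part. -/
def RFstable (f : RF) : Prop :=
  RFproper f ∧ ∀ z : ℂ, Polynomial.aeval z f.denom = 0 → z.re < 0

/-- A rational matrix is stable (lies in RH∞) iff every entry is stable. -/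
def MStable {p m : Type*} (G : Matrix p m RF) : Prop := ∀ i j, RFstable (G i j)

/-- A real matrix viewed as a matrix over ℝ(s). -/
def toRF {p m : Type*} (M : Matrix p m ℝ) : Matrix p m RF := M.map (algebraMap ℝ RF)

/-- A real matrix viewed as a matrix over ℂ. -/
def toC {p m : Type*} (M : Matrix p m ℝ) : Matrix p m ℂ := M.map (fun x => (x : ℂ))

/-- The pencil A - s E as a matrix over ℝ(s). -/
def pencilRF {n : Type*} (A E : Matrix n n ℝ) : Matrix n n RF :=
  toRF A - (RatFunc.X : RF) • toRF E

/-- Admissible pencil: regular, every finite generalized eigenvalue in the open left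
half-plane, and deg det(sE - A) = rank E (all infinite generalized eigenvalues have
partial multiplicity at most 1). -/
def Admissible {n : Type*} [Fintype n] [DecidableEq n] (A E : Matrix n n ℝ) : Prop :=
  (pencilRF A E).det ≠ 0 ∧
  (∀ z : ℂ, (toC A - z • toC E).det = 0 → z.re < 0) ∧
  (Matrix.of fun i j => Polynomial.X * Polynomial.C (E i j) - Polynomial.C (A i j)).det.natDegree
    = E.rank

/-- Transfer function matrix C (sE - A)⁻¹ B + D of a descriptor realization. -/
def tfm {n p m : Type*} [Fintype n] [DecidableEq n] (E A : Matrix n n ℝ)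
    (B : Matrix n m ℝ) (C : Matrix p n ℝ) (D : Matrix p m ℝ) : Matrix p m RF :=
  toRF C * ((RatFunc.X : RF) • toRF E - toRF A)⁻¹ * toRF B + toRF D

/-- Substitution s ↦ -s in a rational function. -/
def flipS (f : RF) : RF := RatFunc.eval (algebraMap ℝ RF) (-(RatFunc.X : RF)) f

/-!
With the Riccati feedback `F`, the state-feedback identity
`(C(sE-A)⁻¹B + D)(F(sE-A-BF)⁻¹BK + K) = (C+DF)(sE-A-BF)⁻¹BK + DK`
gives `G₀⁻¹ = F(sE-A-BF)⁻¹BH⁻¹ + H⁻¹` and identifies `[N̂; M̂]` with the closed-loop transfer matrix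
`W = (C+DF)(sE-A-BF)⁻¹BH⁻¹ + DH⁻¹`. A descriptor transfer matrix with invertible `E` and Hurwitz
pencil is stable, since every entry of `adj(sE-A)` has degree at most `deg det(sE-A)`; so `G₀` and
`W` are stable, and `(G₀X̃, G₀Ỹ)` is a Bezout pair for `(N̂, M̂)`. The GCARE yields
`(C+DF)ᵀ(C+DF) = EᵀXΦ + ΨᵀXE` for `Φ = sE-(A+BF)`, `Ψ = -sE-(A+BF)`, together with
`(C+DF)ᵀDH⁻¹ = -EᵀXBH⁻¹` and `(DH⁻¹)ᵀDH⁻¹ = I`; with these all cross terms of `W(-s)ᵀW(s)` cancel.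
-/

section Stability

def IsHurwitz (q : ℝ[X]) : Prop := q ≠ 0 ∧ ∀ z : ℂ, aeval z q = 0 → z.re < 0

theorem IsHurwitz.mul {q r : ℝ[X]} (hq : IsHurwitz q) (hr : IsHurwitz r) : IsHurwitz (q * r) :=
  ⟨mul_ne_zero hq.1 hr.1, fun z hz => by
    rcases mul_eq_zero.mp ((map_mul (aeval z) q r).symm.trans hz) with h | h
    exacts [hq.2 z h, hr.2 z h]⟩

theorem RFproper.div {p q : ℝ[X]} (hq : q ≠ 0) (hpq : p.degree ≤ q.degree) :
    RFproper (algebraMap ℝ[X] RF p / algebraMap ℝ[X] RF q) := by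
  set f := algebraMap ℝ[X] RF p / algebraMap ℝ[X] RF q
  rcases eq_or_ne p 0 with rfl | hp
  · simp [f, RFproper]
  have hf : f ≠ 0 := div_ne_zero (RatFunc.algebraMap_ne_zero hp) (RatFunc.algebraMap_ne_zero hq)
  have hnum : f.num ≠ 0 := RatFunc.num_ne_zero hf
  have hint : f.intDegree ≤ 0 := by
    rw [RatFunc.intDegree_div (RatFunc.algebraMap_ne_zero hp) (RatFunc.algebraMap_ne_zero hq),
      RatFunc.intDegree_polynomial, RatFunc.intDegree_polynomial, sub_nonpos]
    exact_mod_cast natDegree_le_natDegree hpq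
  rw [RatFunc.intDegree, sub_nonpos, Nat.cast_le] at hint
  rw [RFproper, degree_eq_natDegree hnum, degree_eq_natDegree f.denom_ne_zero]
  exact_mod_cast hint

theorem RFstable.div {p q : ℝ[X]} (hq : IsHurwitz q) (hpq : p.degree ≤ q.degree) :
    RFstable (algebraMap ℝ[X] RF p / algebraMap ℝ[X] RF q) := by
  refine ⟨RFproper.div hq.1 hpq, fun z hz => hq.2 z ?_⟩
  obtain ⟨r, hr⟩ := RatFunc.denom_div_dvd p q
  rw [hr, map_mul, hz, zero_mul]

theorem rfstable_iff_exists_div {f : RF} : RFstable f ↔ ∃ p q : ℝ[X], IsHurwitz q ∧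
    p.degree ≤ q.degree ∧ f = algebraMap ℝ[X] RF p / algebraMap ℝ[X] RF q :=
  ⟨fun h => ⟨f.num, f.denom, ⟨f.denom_ne_zero, h.2⟩, h.1, (RatFunc.num_div_denom f).symm⟩,
    fun ⟨_, _, hq, hpq, hf⟩ => hf ▸ RFstable.div hq hpq⟩

theorem RFstable.mul {f g : RF} (hf : RFstable f) (hg : RFstable g) : RFstable (f * g) := by
  obtain ⟨p, q, hq, hpq, rfl⟩ := rfstable_iff_exists_div.mp hf
  obtain ⟨p', q', hq', hpq', rfl⟩ := rfstable_iff_exists_div.mp hg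
  rw [div_mul_div_comm, ← map_mul, ← map_mul]
  exact RFstable.div (hq.mul hq') (by rw [degree_mul, degree_mul]; exact add_le_add hpq hpq')

theorem RFstable.add {f g : RF} (hf : RFstable f) (hg : RFstable g) : RFstable (f + g) := by
  obtain ⟨p, q, hq, hpq, rfl⟩ := rfstable_iff_exists_div.mp hf
  obtain ⟨p', q', hq', hpq', rfl⟩ := rfstable_iff_exists_div.mp hg
  rw [div_add_div _ _ (RatFunc.algebraMap_ne_zero hq.1) (RatFunc.algebraMap_ne_zero hq'.1),
    ← map_mul, ← map_mul, ← map_mul, ← map_add]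
  refine RFstable.div (hq.mul hq') ((degree_add_le _ _).trans (max_le ?_ ?_))
  · rw [degree_mul, degree_mul]; exact add_le_add hpq le_rfl
  · rw [degree_mul, degree_mul]; exact add_le_add le_rfl hpq'

theorem RFstable.const (c : ℝ) : RFstable (algebraMap ℝ RF c) := by
  have hc : algebraMap ℝ RF c = algebraMap ℝ[X] RF (C c) / algebraMap ℝ[X] RF 1 := by
    rw [map_one, div_one, RatFunc.algebraMap_C, RatFunc.algebraMap_eq_C]
  rw [hc]
  exact RFstable.div ⟨one_ne_zero, fun z hz => by simp at hz⟩ (degree_C_le.trans (by simp))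

def stableSubring : Subring RF where
  carrier := {f | RFstable f}
  mul_mem' := RFstable.mul
  one_mem' := by simpa using RFstable.const 1
  add_mem' := RFstable.add
  zero_mem' := by simpa using RFstable.const 0
  neg_mem' {f} hf := by simpa using (RFstable.const (-1)).mul hf

variable {k l o : Type*}

theorem MStable.mul [Fintype l] {G : Matrix k l RF} {H : Matrix l o RF}
    (hG : MStable G) (hH : MStable H) : MStable (G * H) := fun i j =>
  Subring.sum_mem stableSubring fun r _ => Subring.mul_mem _ (hG i r) (hH r j)

theorem MStable.add {G H : Matrix k l RF} (hG : MStable G) (hH : MStable H) :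
    MStable (G + H) := fun i j => (hG i j).add (hH i j)

theorem MStable.const (G : Matrix k l ℝ) : MStable (toRF G) := fun i j =>
  RFstable.const (G i j)

theorem MStable.submatrix {G : Matrix k l RF} (hG : MStable G) {k' l' : Type*} (r : k' → k)
    (c : l' → l) : MStable (G.submatrix r c) := fun i j => hG (r i) (c j)

end Stability

section Pencil

variable {n : Type*}

-- The shape `X • E.map C + (-A).map C` is the one of `Polynomial.natDegree_det_X_add_C_le`.
def pencilPoly (E A : Matrix n n ℝ) : Matrix n n ℝ[X] := (X : ℝ[X]) • E.map C + (-A).map C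

theorem pencilPoly_map_algebraMap (E A : Matrix n n ℝ) :
    (pencilPoly E A).map (algebraMap ℝ[X] RF) = (RatFunc.X : RF) • toRF E - toRF A := by
  ext i j
  simp [pencilPoly, toRF, RatFunc.algebraMap_C, RatFunc.algebraMap_eq_C, sub_eq_add_neg]
  ring

theorem pencilPoly_map_aeval (E A : Matrix n n ℝ) (z : ℂ) :
    (pencilPoly E A).map (aeval z) = z • toC E - toC A := by
  ext i j
  simp [pencilPoly, toC, sub_eq_add_neg]
  ring

variable [Fintype n] [DecidableEq n]

theorem natDegree_adjugate_X_add_C_le {R : Type*} [CommRing R] (A B : Matrix n n R) (i j : n) :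
    (((X : R[X]) • A.map C + B.map C).adjugate i j).natDegree ≤ Fintype.card n := by
  have hrow : ((X : R[X]) • A.map C + B.map C).updateRow j (Pi.single i 1)
      = (X : R[X]) • (A.updateRow j 0).map C + (B.updateRow j (Pi.single i 1)).map C := by
    ext a b
    rcases eq_or_ne a j with rfl | h
    · rcases eq_or_ne b i with rfl | h' <;> simp [*]
    · simp [updateRow_ne h]
  rw [adjugate_apply, hrow]
  exact natDegree_det_X_add_C_le _ _

theorem degree_det_pencilPoly {E : Matrix n n ℝ} (hE : IsUnit E.det) (A : Matrix n n ℝ) :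
    (pencilPoly E A).det.degree = Fintype.card n :=
  degree_eq_of_le_of_coeff_ne_zero (degree_le_of_natDegree_le (natDegree_det_X_add_C_le _ _))
    (by rw [pencilPoly, coeff_det_X_add_C_card]; exact hE.ne_zero)

theorem isHurwitz_det_pencilPoly {E A : Matrix n n ℝ} (hE : IsUnit E.det)
    (hstab : ∀ z : ℂ, (toC A - z • toC E).det = 0 → z.re < 0) :
    IsHurwitz (pencilPoly E A).det := by
  refine ⟨fun h => by simpa [h] using degree_det_pencilPoly hE A, fun z hz => hstab z ?_⟩
  rw [AlgHom.map_det, AlgHom.mapMatrix_apply] at hz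
  rw [← neg_sub, det_neg, ← pencilPoly_map_aeval, hz, mul_zero]

theorem det_pencil_eq_algebraMap (E A : Matrix n n ℝ) :
    ((RatFunc.X : RF) • toRF E - toRF A).det = algebraMap ℝ[X] RF (pencilPoly E A).det := by
  rw [RingHom.map_det, RingHom.mapMatrix_apply, pencilPoly_map_algebraMap]

theorem isUnit_det_pencil {E : Matrix n n ℝ} (hE : IsUnit E.det) (A : Matrix n n ℝ) :
    IsUnit ((RatFunc.X : RF) • toRF E - toRF A).det := by
  rw [det_pencil_eq_algebraMap, isUnit_iff_ne_zero]
  exact RatFunc.algebraMap_ne_zero fun h => by simpa [h] using degree_det_pencilPoly hE A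

theorem mstable_pencil_inv {E A : Matrix n n ℝ} (hE : IsUnit E.det)
    (hstab : ∀ z : ℂ, (toC A - z • toC E).det = 0 → z.re < 0) :
    MStable ((RatFunc.X : RF) • toRF E - toRF A)⁻¹ := by
  intro i j
  rw [inv_def, det_pencil_eq_algebraMap, ← pencilPoly_map_algebraMap, ← RingHom.mapMatrix_apply,
    ← RingHom.map_adjugate, Matrix.smul_apply, RingHom.mapMatrix_apply, map_apply,
    Ring.inverse_eq_inv', smul_eq_mul, inv_mul_eq_div]
  refine RFstable.div (isHurwitz_det_pencilPoly hE hstab) ?_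
  rw [degree_det_pencilPoly hE]
  exact degree_le_of_natDegree_le (natDegree_adjugate_X_add_C_le _ _ i j)

theorem mstable_tfm {E A : Matrix n n ℝ} (hE : IsUnit E.det)
    (hstab : ∀ z : ℂ, (toC A - z • toC E).det = 0 → z.re < 0) {k l : Type*}
    (B : Matrix n l ℝ) (C : Matrix k n ℝ) (D : Matrix k l ℝ) : MStable (tfm E A B C D) :=
  (((MStable.const C).mul (mstable_pencil_inv hE hstab)).mul (MStable.const B)).add
    (MStable.const D)

end Pencil

section Flip

theorem aeval_neg_X_injective : Function.Injective (aeval (R := ℝ) (-RatFunc.X : RF)) := by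
  rw [injective_iff_map_eq_zero]
  intro p hp
  rw [← RatFunc.algebraMap_X, ← map_neg, aeval_algebraMap_apply,
    map_eq_zero_iff _ (RatFunc.algebraMap_injective ℝ), ← comp_eq_aeval, comp_eq_zero_iff] at hp
  refine hp.resolve_right fun ⟨_, h⟩ => ?_
  simpa using congrArg natDegree h

-- `RatFunc.eval` is not multiplicative in general; `s ↦ -s` is, since `-s` is transcendental.
def flipAlgHom : RF →ₐ[ℝ] RF :=
  RatFunc.liftAlgHom (aeval (R := ℝ) (-RatFunc.X : RF))
    (nonZeroDivisors_le_comap_nonZeroDivisors_of_injective _ aeval_neg_X_injective)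

theorem flipS_eq_flipAlgHom : flipS = flipAlgHom := by
  funext f
  rw [flipAlgHom, RatFunc.liftAlgHom_apply]
  rfl

theorem flipAlgHom_X : flipAlgHom RatFunc.X = -RatFunc.X := by
  rw [← RatFunc.algebraMap_X, ← div_one (algebraMap ℝ[X] RF X), ← map_one (algebraMap ℝ[X] RF),
    flipAlgHom, RatFunc.liftAlgHom_apply_div]
  simp

end Flip

section MatrixAlgebra

variable {R : Type*} [CommRing R] {n k l o : Type*} [Fintype n] [DecidableEq n]

theorem mul_feedback_eq [Fintype l] {P Q : Matrix n n R} (hP : IsUnit P.det) (hQ : IsUnit Q.det)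
    {b : Matrix n l R} {f : Matrix l n R} (hPQ : P - Q = b * f) (c : Matrix k n R)
    (d : Matrix k l R) (K : Matrix l o R) :
    (c * P⁻¹ * b + d) * (f * Q⁻¹ * (b * K) + K) = (c + d * f) * Q⁻¹ * (b * K) + d * K := by
  have hres : P⁻¹ * (b * f) * Q⁻¹ = Q⁻¹ - P⁻¹ := by
    rw [← hPQ, Matrix.mul_sub, Matrix.sub_mul, nonsing_inv_mul _ hP, Matrix.mul_assoc,
      mul_nonsing_inv _ hQ, Matrix.mul_one, Matrix.one_mul]
  calc (c * P⁻¹ * b + d) * (f * Q⁻¹ * (b * K) + K)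
      = c * (P⁻¹ * (b * f) * Q⁻¹) * (b * K) + c * P⁻¹ * (b * K) + d * f * Q⁻¹ * (b * K)
          + d * K := by
        simp only [Matrix.mul_add, Matrix.add_mul, Matrix.mul_assoc]; abel
    _ = (c + d * f) * Q⁻¹ * (b * K) + d * K := by
        rw [hres]
        simp only [Matrix.mul_sub, Matrix.sub_mul, Matrix.add_mul, Matrix.mul_assoc]
        abel

theorem transpose_mul_eq_one_of_lyapunov {Φ Ψ e x : Matrix n n R} (hΦ : IsUnit Φ.det)
    (hΨ : IsUnit Ψ.det) (hx : xᵀ = x) {b : Matrix n l R} {c : Matrix k n R} {d : Matrix k l R}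
    [Fintype k] [DecidableEq l] (hcc : cᵀ * c = eᵀ * x * Φ + Ψᵀ * x * e)
    (hcd : cᵀ * d = -(eᵀ * x * b)) (hdd : dᵀ * d = 1) :
    (c * Ψ⁻¹ * b + d)ᵀ * (c * Φ⁻¹ * b + d) = 1 := by
  have hdc : dᵀ * c = -(bᵀ * x * e) := by
    simpa [transpose_mul, hx, Matrix.mul_assoc] using congrArg transpose hcd
  have hΨT : IsUnit Ψᵀ.det := by rwa [det_transpose]
  calc (c * Ψ⁻¹ * b + d)ᵀ * (c * Φ⁻¹ * b + d)
      = bᵀ * Ψᵀ⁻¹ * (cᵀ * c) * Φ⁻¹ * b + bᵀ * Ψᵀ⁻¹ * (cᵀ * d) + dᵀ * c * Φ⁻¹ * b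
          + dᵀ * d := by
        simp only [transpose_add, transpose_mul, transpose_nonsing_inv, Matrix.add_mul,
          Matrix.mul_add, Matrix.mul_assoc]
        abel
    _ = 1 := by
        rw [hcc, hcd, hdc, hdd]
        simp only [Matrix.mul_add, Matrix.add_mul, Matrix.mul_neg, Matrix.neg_mul,
          Matrix.mul_assoc, mul_nonsing_inv_cancel_left _ _ hΦ,
          nonsing_inv_mul_cancel_left _ _ hΨT]
        abel

theorem map_nonsing_inv_of_isUnit {S F : Type*} [CommRing S] [FunLike F R S]
    [RingHomClass F R S] (f : F) {M : Matrix n n R} (hM : IsUnit M.det) :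
    M⁻¹.map f = (M.map f)⁻¹ :=
  (inv_eq_right_inv (by
    rw [← Matrix.map_mul, mul_nonsing_inv _ hM, Matrix.map_one _ (map_zero f) (map_one f)])).symm

end MatrixAlgebra

section RealMatrices

variable {k l o : Type*}

@[simp] theorem toRF_add (M N : Matrix k l ℝ) : toRF (M + N) = toRF M + toRF N := by
  ext i j; simp [toRF]

@[simp] theorem toRF_sub (M N : Matrix k l ℝ) : toRF (M - N) = toRF M - toRF N := by
  ext i j; simp [toRF]

@[simp] theorem toRF_neg (M : Matrix k l ℝ) : toRF (-M) = -toRF M := by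
  ext i j; simp [toRF]

@[simp] theorem toRF_transpose (M : Matrix k l ℝ) : toRF Mᵀ = (toRF M)ᵀ := by
  ext i j; simp [toRF]

@[simp] theorem toRF_mul [Fintype l] (M : Matrix k l ℝ) (N : Matrix l o ℝ) :
    toRF (M * N) = toRF M * toRF N :=
  Matrix.map_mul

@[simp] theorem toRF_zero : toRF (0 : Matrix k l ℝ) = 0 := by
  ext i j; simp [toRF]

@[simp] theorem toRF_one [DecidableEq k] : toRF (1 : Matrix k k ℝ) = 1 :=
  Matrix.map_one _ (map_zero _) (map_one _)

end RealMatrices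

section Riccati

variable {R : Type*} [CommRing R] {n k l : Type*} [Fintype n] [Fintype k] [Fintype l]
  {E A X : Matrix n n R} {B : Matrix n l R} {C : Matrix k n R}
  {D : Matrix k l R} {F : Matrix l n R}

theorem gram_mul_feedback [DecidableEq l] (hD : IsUnit (Dᵀ * D).det)
    (hF : F = -((Dᵀ * D)⁻¹ * (Bᵀ * X * E + Dᵀ * C))) :
    Dᵀ * D * F = -(Bᵀ * X * E + Dᵀ * C) := by
  rw [hF, Matrix.mul_neg, mul_nonsing_inv_cancel_left _ _ hD]

theorem transpose_feedback_mul_gram (hX : X.IsSymm)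
    (hDF : Dᵀ * D * F = -(Bᵀ * X * E + Dᵀ * C)) :
    Fᵀ * (Dᵀ * D) = -(Eᵀ * X * B + Cᵀ * D) := by
  simpa [transpose_mul, hX.eq, Matrix.mul_assoc] using congrArg transpose hDF

theorem closedLoop_transpose_mul (hX : X.IsSymm)
    (hDF : Dᵀ * D * F = -(Bᵀ * X * E + Dᵀ * C)) :
    (C + D * F)ᵀ * D = -(Eᵀ * X * B) := by
  rw [transpose_add, transpose_mul, Matrix.add_mul, Matrix.mul_assoc,
    transpose_feedback_mul_gram hX hDF]
  abel

theorem closedLoop_lyapunov [DecidableEq l] (hX : X.IsSymm) (hD : IsUnit (Dᵀ * D).det)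
    (hDF : Dᵀ * D * F = -(Bᵀ * X * E + Dᵀ * C))
    (hric : Eᵀ * X * A + Aᵀ * X * E + Cᵀ * C
      - (Eᵀ * X * B + Cᵀ * D) * (Dᵀ * D)⁻¹ * (Bᵀ * X * E + Dᵀ * C) = 0) :
    (C + D * F)ᵀ * (C + D * F) = -(Eᵀ * X * (A + B * F)) - (A + B * F)ᵀ * X * E := by
  have hgain : (Eᵀ * X * B + Cᵀ * D) * (Dᵀ * D)⁻¹ * (Bᵀ * X * E + Dᵀ * C)
      = Fᵀ * (Dᵀ * D) * F := by
    rw [← neg_neg (Eᵀ * X * B + Cᵀ * D), ← transpose_feedback_mul_gram hX hDF,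
      ← neg_neg (Bᵀ * X * E + Dᵀ * C), ← hDF, Matrix.neg_mul, Matrix.neg_mul, Matrix.mul_neg,
      neg_neg, Matrix.mul_assoc (Fᵀ * (Dᵀ * D)), nonsing_inv_mul_cancel_left _ _ hD]
  have hCC : Cᵀ * C = Fᵀ * (Dᵀ * D) * F - Eᵀ * X * A - Aᵀ * X * E := by
    rw [hgain] at hric
    rw [← sub_eq_zero, ← hric]
    abel
  have hDC : Dᵀ * C = -(Dᵀ * D * F) - Bᵀ * X * E := by
    rw [hDF]; abel
  calc (C + D * F)ᵀ * (C + D * F) = Cᵀ * C + Fᵀ * (Dᵀ * C) + (C + D * F)ᵀ * D * F := by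
        simp only [transpose_add, transpose_mul, Matrix.add_mul, Matrix.mul_add, Matrix.mul_assoc]
    _ = -(Eᵀ * X * (A + B * F)) - (A + B * F)ᵀ * X * E := by
        rw [hCC, hDC, closedLoop_transpose_mul hX hDF]
        simp only [transpose_add, transpose_mul, Matrix.mul_add, Matrix.add_mul, Matrix.mul_sub,
          Matrix.mul_neg, Matrix.neg_mul, Matrix.mul_assoc]
        abel

theorem transpose_mul_self_of_gram_eq [DecidableEq l] {H : Matrix l l R} (hH : IsUnit H.det)
    (hHD : Hᵀ * H = Dᵀ * D) : (D * H⁻¹)ᵀ * (D * H⁻¹) = 1 := by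
  have hHT : IsUnit Hᵀ.det := by rwa [det_transpose]
  rw [transpose_mul, transpose_nonsing_inv, Matrix.mul_assoc, ← Matrix.mul_assoc Dᵀ, ← hHD,
    Matrix.mul_assoc, nonsing_inv_mul_cancel_left _ _ hHT, mul_nonsing_inv _ hH]

end Riccati

section TransferFunctions

variable {n k l o : Type*}

theorem toRF_map_flipAlgHom (M : Matrix k l ℝ) : (toRF M).map flipAlgHom = toRF M := by
  ext i j
  exact flipAlgHom.commutes (M i j)

theorem pencil_map_flipAlgHom (E A : Matrix n n ℝ) :
    ((RatFunc.X : RF) • toRF E - toRF A).map flipAlgHom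
      = (RatFunc.X : RF) • toRF (-E) - toRF A := by
  ext i j
  simp only [toRF, map_apply, Matrix.sub_apply, Matrix.smul_apply, Matrix.neg_apply, smul_eq_mul,
    map_sub, map_mul, map_neg, AlgHom.commutes, flipAlgHom_X]
  ring

variable [Fintype n] [DecidableEq n] {E : Matrix n n ℝ}

theorem tfm_map_flipS (hE : IsUnit E.det) (A : Matrix n n ℝ)
    (B : Matrix n l ℝ) (C : Matrix k n ℝ) (D : Matrix k l ℝ) :
    (tfm E A B C D).map flipS = tfm (-E) A B C D := by
  rw [flipS_eq_flipAlgHom, tfm, tfm, Matrix.map_add _ (map_add flipAlgHom), Matrix.map_mul,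
    Matrix.map_mul, map_nonsing_inv_of_isUnit _ (isUnit_det_pencil hE A), pencil_map_flipAlgHom,
    toRF_map_flipAlgHom, toRF_map_flipAlgHom, toRF_map_flipAlgHom]

theorem tfm_mul_tfm_feedback [Fintype l] (hE : IsUnit E.det) (A : Matrix n n ℝ)
    (B : Matrix n l ℝ) (C : Matrix k n ℝ) (D : Matrix k l ℝ) (F : Matrix l n ℝ) (K : Matrix l o ℝ) :
    tfm E A B C D * tfm E (A + B * F) (B * K) F K
      = tfm E (A + B * F) (B * K) (C + D * F) (D * K) := by
  have h := mul_feedback_eq (isUnit_det_pencil hE A) (isUnit_det_pencil hE (A + B * F))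
    (b := toRF B) (f := toRF F) (by rw [toRF_add, toRF_mul]; abel) (toRF C) (toRF D) (toRF K)
  simpa only [tfm, toRF_add, toRF_mul] using h

theorem tfm_mul_tfm_feedback_eq_one [Fintype l] [DecidableEq l] (hE : IsUnit E.det)
    (A : Matrix n n ℝ) (B : Matrix n l ℝ) {H H' : Matrix l l ℝ} (hH : H * H' = 1)
    (F : Matrix l n ℝ) :
    tfm E A B (-(H * F)) H * tfm E (A + B * F) (B * H') F H' = 1 := by
  rw [tfm_mul_tfm_feedback hE, neg_add_cancel, hH, tfm, toRF_zero, toRF_one, Matrix.zero_mul,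
    Matrix.zero_mul, zero_add]

theorem tfm_map_flipS_transpose_mul_self [Fintype k] [DecidableEq l] (hE : IsUnit E.det)
    (A : Matrix n n ℝ) (B : Matrix n l ℝ) (C : Matrix k n ℝ) (D : Matrix k l ℝ)
    {X : Matrix n n ℝ} (hX : X.IsSymm) (hCC : Cᵀ * C = -(Eᵀ * X * A) - Aᵀ * X * E)
    (hCD : Cᵀ * D = -(Eᵀ * X * B)) (hDD : Dᵀ * D = 1) :
    ((tfm E A B C D).map flipS)ᵀ * tfm E A B C D = 1 := by
  have hE' : IsUnit (-E).det := by
    rw [det_neg]; exact (isUnit_one.neg.pow _).mul hE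
  rw [tfm_map_flipS hE, tfm, tfm]
  refine transpose_mul_eq_one_of_lyapunov (isUnit_det_pencil hE A) (isUnit_det_pencil hE' A)
    (x := toRF X) (e := toRF E) (by rw [← toRF_transpose, hX.eq]) ?_ ?_ ?_
  · rw [← toRF_transpose, ← toRF_mul, hCC]
    simp only [toRF_sub, toRF_neg, toRF_mul, toRF_transpose, transpose_sub, transpose_smul,
      transpose_neg, Matrix.neg_mul, smul_neg, Matrix.mul_sub, Matrix.sub_mul, Matrix.mul_smul,
      Matrix.smul_mul]
    abel
  · rw [← toRF_transpose, ← toRF_mul, hCD]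
    simp only [toRF_neg, toRF_mul, toRF_transpose]
  · rw [← toRF_transpose, ← toRF_mul, hDD, toRF_one]

theorem tfm_closedLoop_inner [Fintype k] [Fintype l] [DecidableEq l] (hE : IsUnit E.det)
    {A X : Matrix n n ℝ} {B : Matrix n l ℝ} {C : Matrix k n ℝ} {D : Matrix k l ℝ}
    {H : Matrix l l ℝ} {F : Matrix l n ℝ} (hX : X.IsSymm) (hH : IsUnit H.det)
    (hHD : Hᵀ * H = Dᵀ * D)
    (hF : F = -((Dᵀ * D)⁻¹ * (Bᵀ * X * E + Dᵀ * C)))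
    (hric : Eᵀ * X * A + Aᵀ * X * E + Cᵀ * C
      - (Eᵀ * X * B + Cᵀ * D) * (Dᵀ * D)⁻¹ * (Bᵀ * X * E + Dᵀ * C) = 0) :
    ((tfm E (A + B * F) (B * H⁻¹) (C + D * F) (D * H⁻¹)).map flipS)ᵀ
      * tfm E (A + B * F) (B * H⁻¹) (C + D * F) (D * H⁻¹) = 1 := by
  have hgram : IsUnit (Dᵀ * D).det := by
    rw [← hHD, det_mul, det_transpose]; exact hH.mul hH
  have hDF := gram_mul_feedback hgram hF
  refine tfm_map_flipS_transpose_mul_self hE _ _ _ _ hX (closedLoop_lyapunov hX hgram hDF hric)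
    ?_ (transpose_mul_self_of_gram_eq hH hHD)
  rw [← Matrix.mul_assoc, closedLoop_transpose_mul hX hDF, Matrix.neg_mul, Matrix.mul_assoc]

end TransferFunctions

section Factorizations

variable {m p : Type*} [Fintype m] [DecidableEq m]

theorem mul_nonsing_inv_mul_inv_cancel_right {R : Type*} [CommRing R] {G : Matrix m m R}
    (hG : IsUnit G.det) (N : Matrix p m R) (M : Matrix m m R) :
    N * G⁻¹ * (M * G⁻¹)⁻¹ = N * M⁻¹ := by
  rw [Matrix.mul_inv_rev, nonsing_inv_nonsing_inv _ hG, Matrix.mul_assoc,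
    nonsing_inv_mul_cancel_left _ _ hG]

theorem exists_bezout_mul_nonsing_inv [Fintype p] {G : Matrix m m RF} (hG : MStable G)
    (hGu : IsUnit G.det) {N : Matrix p m RF} {M : Matrix m m RF} {Xt : Matrix m p RF}
    {Yt : Matrix m m RF} (hXt : MStable Xt) (hYt : MStable Yt) (h : Yt * M - Xt * N = 1) :
    ∃ (Xt' : Matrix m p RF) (Yt' : Matrix m m RF),
      MStable Xt' ∧ MStable Yt' ∧ Yt' * (M * G⁻¹) - Xt' * (N * G⁻¹) = 1 := by
  refine ⟨G * Xt, G * Yt, hG.mul hXt, hG.mul hYt, ?_⟩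
  calc G * Yt * (M * G⁻¹) - G * Xt * (N * G⁻¹) = G * ((Yt * M - Xt * N) * G⁻¹) := by
        simp only [Matrix.mul_sub, Matrix.sub_mul, Matrix.mul_assoc]
    _ = 1 := by rw [h, Matrix.one_mul, mul_nonsing_inv _ hGu]

theorem transpose_mul_eq_add_of_finAdd {R : Type*} [NonUnitalNonAssocSemiring R] {a b : ℕ}
    {k l : Type*} (U : Matrix (Fin (a + b)) k R) (V : Matrix (Fin (a + b)) l R) :
    Uᵀ * V = (U.submatrix (Fin.castAdd b) id)ᵀ * V.submatrix (Fin.castAdd b) id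
      + (U.submatrix (Fin.natAdd a) id)ᵀ * V.submatrix (Fin.natAdd a) id := by
  ext i j
  simp only [Matrix.add_apply, Matrix.mul_apply, transpose_apply, submatrix_apply, id_eq,
    Fin.sum_univ_add]

end Factorizations

/-- the spectral factor G₀ = -H_rF_r(sE_r - A_r)⁻¹B_r + H_r normalizes a
stable right coprime factorization: (N G₀⁻¹, M G₀⁻¹) is a stable normalized RCF of
G = N M⁻¹. -/
theorem stmt_6 {n m p : ℕ} (Er Ar : Matrix (Fin n) (Fin n) ℝ)
    (hEr : IsUnit Er.det)
    (hstab : ∀ z : ℂ, (toC Ar - z • toC Er).det = 0 → z.re < 0)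
    (Br : Matrix (Fin n) (Fin m) ℝ) (Cr : Matrix (Fin (p + m)) (Fin n) ℝ)
    (Dr : Matrix (Fin (p + m)) (Fin m) ℝ)
    (N : Matrix (Fin p) (Fin m) RF)
    (hN : N = (tfm Er Ar Br Cr Dr).submatrix (Fin.castAdd m) id)
    (M : Matrix (Fin m) (Fin m) RF)
    (hM : M = (tfm Er Ar Br Cr Dr).submatrix (Fin.natAdd p) id)
    (hMdet : M.det ≠ 0)
    (hcoprime : ∃ (Xtil : Matrix (Fin m) (Fin p) RF) (Ytil : Matrix (Fin m) (Fin m) RF),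
      MStable Xtil ∧ MStable Ytil ∧ Ytil * M - Xtil * N = 1)
    (Hr : Matrix (Fin m) (Fin m) ℝ) (hHr : IsUnit Hr.det) (hHrD : Hrᵀ * Hr = Drᵀ * Dr)
    -- X_r : symmetric stabilizing solution of the GCARE, with feedback F_r
    (Xr : Matrix (Fin n) (Fin n) ℝ) (hXr : Xr.IsSymm)
    (Fr : Matrix (Fin m) (Fin n) ℝ)
    (hFr : Fr = -((Drᵀ * Dr)⁻¹ * (Brᵀ * Xr * Er + Drᵀ * Cr)))
    (hric : Erᵀ * Xr * Ar + Arᵀ * Xr * Er + Crᵀ * Cr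
      - (Erᵀ * Xr * Br + Crᵀ * Dr) * (Drᵀ * Dr)⁻¹ * (Brᵀ * Xr * Er + Drᵀ * Cr) = 0)
    (hFstab : ∀ z : ℂ, (toC (Ar + Br * Fr) - z • toC Er).det = 0 → z.re < 0)
    (G₀ : Matrix (Fin m) (Fin m) RF) (hG₀ : G₀ = tfm Er Ar Br (-(Hr * Fr)) Hr)
    (Nhat : Matrix (Fin p) (Fin m) RF) (hNhat : Nhat = N * G₀⁻¹)
    (Mhat : Matrix (Fin m) (Fin m) RF) (hMhat : Mhat = M * G₀⁻¹) :
    G₀.det ≠ 0 ∧ MStable Nhat ∧ MStable Mhat ∧ Mhat.det ≠ 0 ∧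
    N * M⁻¹ = Nhat * Mhat⁻¹ ∧
    (∃ (Xtil' : Matrix (Fin m) (Fin p) RF) (Ytil' : Matrix (Fin m) (Fin m) RF),
      MStable Xtil' ∧ MStable Ytil' ∧ Ytil' * Mhat - Xtil' * Nhat = 1) ∧
    (Nhat.map flipS)ᵀ * Nhat + (Mhat.map flipS)ᵀ * Mhat = 1 := by
  obtain ⟨Xt, Yt, hXt, hYt, hbezout⟩ := hcoprime
  have hG₀Z : G₀ * tfm Er (Ar + Br * Fr) (Br * Hr⁻¹) Fr Hr⁻¹ = 1 :=
    hG₀ ▸ tfm_mul_tfm_feedback_eq_one hEr Ar Br (mul_nonsing_inv _ hHr) Fr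
  have hG₀u : IsUnit G₀.det := isUnit_det_of_right_inverse hG₀Z
  set W := tfm Er (Ar + Br * Fr) (Br * Hr⁻¹) (Cr + Dr * Fr) (Dr * Hr⁻¹)
  have hW : tfm Er Ar Br Cr Dr * G₀⁻¹ = W := by
    rw [inv_eq_right_inv hG₀Z, tfm_mul_tfm_feedback hEr]
  have hNhatW : Nhat = W.submatrix (Fin.castAdd m) id := by
    rw [hNhat, hN, ← hW, submatrix_mul _ _ _ id _ Function.bijective_id, submatrix_id_id]
  have hMhatW : Mhat = W.submatrix (Fin.natAdd p) id := by
    rw [hMhat, hM, ← hW, submatrix_mul _ _ _ id _ Function.bijective_id, submatrix_id_id]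
  have hWstable : MStable W := mstable_tfm hEr hFstab _ _ _
  refine ⟨hG₀u.ne_zero, hNhatW ▸ hWstable.submatrix _ _, hMhatW ▸ hWstable.submatrix _ _, ?_,
    ?_, ?_, ?_⟩
  · rw [hMhat, det_mul, det_nonsing_inv, Ring.inverse_eq_inv']
    exact mul_ne_zero hMdet (inv_ne_zero hG₀u.ne_zero)
  · rw [hNhat, hMhat, mul_nonsing_inv_mul_inv_cancel_right hG₀u]
  · exact hNhat ▸ hMhat ▸
      exists_bezout_mul_nonsing_inv (hG₀ ▸ mstable_tfm hEr hstab _ _ _) hG₀u hXt hYt hbezout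
  · rw [hNhatW, hMhatW, ← submatrix_map, ← submatrix_map, ← transpose_mul_eq_add_of_finAdd]
    exact tfm_closedLoop_inner hEr hXr hHr hHrD hFr hric

end
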